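/- arXiv:2508.15484 — 4 statements merged into one kernel-verified Lean document; each statement's English description precedes it below -/
import Mathlib

section
/- The recursively defined Gray code list L(n,k) of all weak compositions of n into k parts, given by L(j,2) = ⟨(j,0),(j−1,1),...,(0,j)⟩ and L(j,k+1) = the concatenation over l = 0,...,j of (−1)^l [L(j−l,k) × {l}] (where (−1)^l denotes reversing the list when l is odd), contains every weak composition of n into k parts exactly once; in particular its length is C(n+k−1, k−1). -/
/-- Klingsberg's Gray code list `L(j,k)` of the weak compositions of `j` into
`k` parts, as vectors `Fin k → ℕ`.  Base case: `L(j,2) = ⟨(j,0),(j-1,1),…,(0,j)⟩`.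
Recursive case: `L(j,k+1)` is the concatenation over `l = 0,…,j` of
`L(j-l,k)` with the entry `l` appended as last coordinate, the sublist being
reversed when `l` is odd.  (Values for `k < 2` are irrelevant placeholders.) -/
def grayL : (j k : ℕ) → List (Fin k → ℕ)
  | _, 0 => []
  | _, 1 => []
  | j, 2 => (List.range (j + 1)).map (fun a => ![j - a, a])
  | j, (k + 3) =>
      ((List.range (j + 1)).map (fun l =>
        (if l % 2 = 1 then (grayL (j - l) (k + 2)).reverse else grayL (j - l) (k + 2)).map
          (fun c => Fin.snoc c l))).flatten
  termination_by j k => k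

/-- Hockey stick identity. -/
theorem gray_hockey (r n : ℕ) :
    ∑ i ∈ Finset.range (n+1), (i + r).choose r = (n + r + 1).choose (r + 1) := by
  induction n with
  | zero => simp
  | succ m ih =>
      rw [Finset.sum_range_succ, ih, show m+1+r+1 = (m+r+1)+1 by ring,
        Nat.choose_succ_succ (m+r+1) r, show m+1+r = m+r+1 by ring]
      ring

theorem gray_list_sum_range (f : ℕ → ℕ) (m : ℕ) :
    ((List.range m).map f).sum = ∑ i ∈ Finset.range m, f i := by
  induction m with
  | zero => simp
  | succ p ih =>
      rw [List.range_succ, List.map_append, List.sum_append, Finset.sum_range_succ, ih]; simp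

theorem gray_two (n : ℕ) :
    (grayL n 2).Nodup ∧
    (∀ X : Fin 2 → ℕ, X ∈ grayL n 2 ↔ ∑ i, X i = n) ∧
    (grayL n 2).length = (n + 1).choose 1 := by
  refine ⟨?_, ?_, ?_⟩
  · rw [grayL]
    refine List.Nodup.map ?_ List.nodup_range
    intro a b h
    simpa using congrFun h 1
  · intro X
    rw [grayL]
    simp only [List.mem_map, List.mem_range, Fin.sum_univ_two]
    constructor
    · rintro ⟨a, ha, rfl⟩
      simp only [Matrix.cons_val_zero, Matrix.cons_val_one, Matrix.head_cons]
      omega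
    · intro h
      refine ⟨X 1, by omega, ?_⟩
      funext i
      fin_cases i <;> simp <;> omega
  · rw [grayL]
    simp [Nat.choose_one_right]

theorem gray_aux (k : ℕ) : ∀ n : ℕ,
    (grayL n (k+2)).Nodup ∧
    (∀ X : Fin (k+2) → ℕ, X ∈ grayL n (k+2) ↔ ∑ i, X i = n) ∧
    (grayL n (k+2)).length = (n + k + 1).choose (k + 1) := by
  induction k with
  | zero => exact fun n => gray_two n
  | succ k ih =>
      intro n
      have mem_sub : ∀ (l : ℕ) (X : Fin (k+3) → ℕ),
          X ∈ (if l % 2 = 1 then (grayL (n - l) (k + 2)).reverse else grayL (n - l) (k + 2)).map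
            (fun c : Fin (k+2) → ℕ => Fin.snoc c l) ↔
          ∃ c : Fin (k+2) → ℕ, ∑ i, c i = n - l ∧ Fin.snoc c l = X := by
        intro l X
        by_cases hl : l % 2 = 1 <;>
          simp [hl, List.mem_map, (ih (n - l)).2.1]
      refine ⟨?_, ?_, ?_⟩
      · rw [grayL]
        rw [List.nodup_flatten]
        constructor
        · intro L hL
          simp only [List.mem_map, List.mem_range] at hL
          obtain ⟨l, hl, rfl⟩ := hL
          have hnd : (if l % 2 = 1 then (grayL (n - l) (k + 2)).reverse
              else grayL (n - l) (k + 2)).Nodup := by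
            by_cases hpar : l % 2 = 1 <;> simp [hpar, (ih (n - l)).1]
          refine hnd.map ?_
          intro a b h
          have := congrArg Fin.init h
          simpa [Fin.init_snoc] using this
        · rw [List.pairwise_map]
          refine List.Pairwise.imp ?_ List.pairwise_lt_range
          intro a b hab
          intro X hXa hXb
          rw [mem_sub] at hXa hXb
          obtain ⟨c, -, rfl⟩ := hXa
          obtain ⟨c', -, h'⟩ := hXb
          have := congrFun h' (Fin.last _)
          simp [Fin.snoc_last] at this
          omega
      · intro X
        rw [grayL]
        simp only [List.mem_flatten, List.mem_map, List.mem_range]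
        constructor
        · rintro ⟨L, ⟨l, hl, rfl⟩, hX⟩
          rw [mem_sub] at hX
          obtain ⟨c, hc, rfl⟩ := hX
          rw [Fin.sum_univ_castSucc]
          simp only [Fin.snoc_castSucc, Fin.snoc_last, hc]
          omega
        · intro h
          refine ⟨_, ⟨X (Fin.last _), ?_, rfl⟩, ?_⟩
          · rw [Fin.sum_univ_castSucc] at h
            omega
          · rw [mem_sub]
            refine ⟨Fin.init X, ?_, Fin.snoc_init_self X⟩
            rw [Fin.sum_univ_castSucc] at h
            simp only [Fin.init]
            omega
      · rw [grayL, List.length_flatten, List.map_map]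
        have hfun : (List.length ∘ fun l =>
            (if l % 2 = 1 then (grayL (n - l) (k + 2)).reverse
              else grayL (n - l) (k + 2)).map (fun c : Fin (k+2) → ℕ => (Fin.snoc c l : Fin (k+3) → ℕ)))
            = fun l => (n - l + k + 1).choose (k + 1) := by
          funext l
          by_cases hpar : l % 2 = 1 <;>
            simp [hpar, Function.comp, (ih (n - l)).2.2]
        rw [hfun, gray_list_sum_range]
        have hrefl : ∑ l ∈ Finset.range (n+1), (n - l + k + 1).choose (k + 1)
            = ∑ l ∈ Finset.range (n+1), (l + (k + 1)).choose (k + 1) := by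
          rw [← Finset.sum_range_reflect]
          refine Finset.sum_congr rfl ?_
          intro l hl
          simp only [Finset.mem_range] at hl
          congr 1
          omega
        rw [hrefl, gray_hockey (k+1) n]

/-- The Gray code list `L(n,k)` (for `k ≥ 2`) contains every weak composition
of `n` into `k` parts exactly once; in particular its length is
`C(n+k-1, k-1)`. -/
theorem grayL_complete (n k : ℕ) (hk : 2 ≤ k) :
    (grayL n k).Nodup ∧
    (∀ X : Fin k → ℕ, X ∈ grayL n k ↔ ∑ i, X i = n) ∧
    (grayL n k).length = (n + k - 1).choose (k - 1) := by
  obtain ⟨m, rfl⟩ : ∃ m, k = m + 2 := ⟨k - 2, by omega⟩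
  obtain ⟨h1, h2, h3⟩ := gray_aux m n
  refine ⟨h1, h2, ?_⟩
  rw [h3]
  congr 1 <;> omega
end

section
/- In the Gray code list L(n,k) for k ≥ 2, any two consecutive composition vectors differ at exactly two coordinates, one increasing by 1 and the other decreasing by 1. -/
/-- The adjacency relation: the next vector is obtained by increasing one
coordinate by 1 and decreasing another by 1. -/
def gAdj {k : ℕ} (u v : Fin k → ℕ) : Prop :=
  ∃ i j : Fin k, i ≠ j ∧ v i = u i + 1 ∧ v j + 1 = u j ∧
    ∀ l : Fin k, l ≠ i → l ≠ j → v l = u l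

lemma gAdj_symm {k : ℕ} {u v : Fin k → ℕ} (h : gAdj u v) : gAdj v u := by
  obtain ⟨i, j, hij, h1, h2, h3⟩ := h
  exact ⟨j, i, hij.symm, h2.symm, h1.symm, fun l hl1 hl2 => (h3 l hl2 hl1).symm⟩

lemma gAdj_snoc {k : ℕ} {u v : Fin k → ℕ} (l : ℕ) (h : gAdj u v) :
    gAdj (Fin.snoc u l) (Fin.snoc v l) := by
  obtain ⟨i, j, hij, h1, h2, h3⟩ := h
  refine ⟨i.castSucc, j.castSucc, by simpa using hij, by simpa using h1,
    by simpa using h2, ?_⟩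
  intro m hm1 hm2
  induction m using Fin.lastCases with
  | last => simp
  | cast m =>
    simp only [Fin.snoc_castSucc]
    exact h3 m (fun hh => hm1 (by rw [hh])) (fun hh => hm2 (by rw [hh]))

/-- The "elementary" composition: value `m` at coordinate `p`, zero elsewhere. -/
def eV (k p m : ℕ) : Fin k → ℕ := fun i => if (i : ℕ) = p then m else 0

lemma snoc_eV {k : ℕ} (p m l : ℕ) (hp : p < k) :
    (Fin.snoc (eV k p m) l : Fin (k+1) → ℕ) =
      fun i : Fin (k+1) => if (i : ℕ) = p then m else if (i : ℕ) = k then l else 0 := by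
  funext i
  induction i using Fin.lastCases with
  | last =>
    simp only [Fin.snoc_last, Fin.val_last]
    rw [if_neg (by omega : ¬ k = p)]
    simp
  | cast i =>
    have hik : (i : ℕ) ≠ k := by omega
    simp only [Fin.snoc_castSucc, Fin.coe_castSucc, eV]
    by_cases h : (i : ℕ) = p <;> simp [h, hik]

lemma gAdj_boundary {k : ℕ} (p m l : ℕ) (hp : p < k + 2) (hm : 1 ≤ m) :
    gAdj (Fin.snoc (eV (k+2) p m) l) (Fin.snoc (eV (k+2) p (m-1)) (l+1)) := by
  rw [snoc_eV (k := k+2) _ _ _ hp, snoc_eV (k := k+2) _ _ _ hp]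
  refine ⟨Fin.last (k+2), ⟨p, by omega⟩, ?_, ?_, ?_, ?_⟩
  · intro h
    have := congrArg Fin.val h
    simp only [Fin.val_last, Fin.val_mk] at this
    omega
  · simp only [Fin.val_last]
    split_ifs <;> omega
  · simp only [Fin.val_mk]
    split_ifs <;> omega
  · intro x hx1 hx2
    have hx1' : (x : ℕ) ≠ k + 2 := fun h => hx1 (Fin.ext (by simp [h]))
    have hx2' : (x : ℕ) ≠ p := fun h => hx2 (Fin.ext (by simp [h]))
    simp only
    split_ifs <;> omega

lemma grayL_zero : ∀ k, grayL 0 (k + 2) = [fun _ => 0] := by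
  intro k
  induction k with
  | zero =>
    show grayL 0 2 = _
    simp only [grayL]
    rw [show List.range 1 = [0] from rfl]
    simp only [List.map_cons, List.map_nil]
    congr 1
    funext i
    fin_cases i <;> rfl
  | succ k ih =>
    show grayL 0 (k + 3) = _
    simp only [grayL]
    rw [show List.range 1 = [0] from rfl]
    simp only [List.map_cons, List.map_nil, Nat.zero_sub, ih, List.flatten]
    norm_num
    funext i
    induction i using Fin.lastCases with
    | last => simp
    | cast i => simp

lemma grayL_head : ∀ k m, (grayL m (k + 2)).head? = some (eV (k+2) 0 m) := by
  intro k
  induction k with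
  | zero =>
    intro m
    show (grayL m 2).head? = _
    simp only [grayL]
    rw [List.range_succ_eq_map, List.map_cons, List.head?_cons]
    congr 1
    funext i
    fin_cases i <;> simp [eV]
  | succ k ih =>
    intro m
    show (grayL m (k + 3)).head? = _
    simp only [grayL]
    rw [List.range_succ_eq_map, List.map_cons, List.flatten_cons]
    rw [if_neg (by omega : ¬ (0:ℕ) % 2 = 1)]
    rw [List.head?_append, List.head?_map, Nat.sub_zero, ih m]
    simp only [Option.map_some, Option.some_or]
    congr 1
    rw [snoc_eV (k := k+2) 0 m 0 (by omega)]
    funext i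
    simp only [eV]
    by_cases h : (i : ℕ) = 0 <;> simp [h]

lemma grayL_getLast : ∀ k m, (grayL m (k + 2)).getLast? = some (eV (k+2) (k+1) m) := by
  intro k
  induction k with
  | zero =>
    intro m
    show (grayL m 2).getLast? = _
    simp only [grayL]
    rw [List.range_succ, List.map_append, List.map_cons, List.map_nil,
      List.getLast?_append_of_ne_nil _ (by simp), List.getLast?_singleton]
    congr 1
    funext i
    fin_cases i <;> simp [eV] <;> omega
  | succ k ih =>
    intro m
    show (grayL m (k + 3)).getLast? = _
    simp only [grayL]
    rw [List.range_succ, List.map_append, List.map_cons, List.map_nil,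
      List.flatten_append, List.flatten_cons, List.flatten_nil, List.append_nil,
      Nat.sub_self, grayL_zero]
    have hne : ((if m % 2 = 1 then ([fun _ => (0:ℕ)] : List (Fin (k+2) → ℕ)).reverse
        else ([fun _ => (0:ℕ)] : List (Fin (k+2) → ℕ))).map
        (fun c : Fin (k+2) → ℕ => (Fin.snoc c m : Fin (k+3) → ℕ))) ≠ [] := by
      split <;> simp
    rw [List.getLast?_append_of_ne_nil _ hne]
    have hsing : (if m % 2 = 1 then ([fun _ => (0:ℕ)] : List (Fin (k+2) → ℕ)).reverse
        else ([fun _ => (0:ℕ)] : List (Fin (k+2) → ℕ))) =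
        ([fun _ => (0:ℕ)] : List (Fin (k+2) → ℕ)) := by split <;> simp
    rw [hsing, List.map_cons, List.map_nil, List.getLast?_singleton]
    congr 1
    funext i
    induction i using Fin.lastCases with
    | last => simp [eV]
    | cast i =>
      simp only [Fin.snoc_castSucc, eV, Fin.coe_castSucc]
      rw [if_neg (by have := i.isLt; omega : ¬ (i:ℕ) = k + 2)]

lemma grayL_ne_nil (k m : ℕ) : grayL m (k + 2) ≠ [] := by
  intro h
  have := grayL_head k m
  rw [h] at this
  simp at this

lemma grayL_chain : ∀ k m, List.Chain' gAdj (grayL m (k + 2)) := by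
  intro k
  induction k with
  | zero =>
    intro m
    show List.Chain' gAdj (grayL m 2)
    simp only [grayL]
    unfold List.Chain'
    rw [List.isChain_map]
    refine (List.isChain_range_succ _ m).mpr ?_
    intro a ha
    refine ⟨1, 0, by decide, ?_, ?_, ?_⟩
    · simp
    · simp only [Matrix.cons_val_zero]
      omega
    · intro l h1 h0
      fin_cases l <;> simp_all
  | succ k ih =>
    intro m
    show List.Chain' gAdj (grayL m (k + 3))
    simp only [grayL]
    have hnil : [] ∉ (List.range (m + 1)).map (fun l =>
        (if l % 2 = 1 then (grayL (m - l) (k + 2)).reverse else grayL (m - l) (k + 2)).map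
          (fun c => (Fin.snoc c l : Fin (k+3) → ℕ))) := by
      intro h
      rw [List.mem_map] at h
      obtain ⟨l, _, hl⟩ := h
      rw [List.map_eq_nil_iff] at hl
      revert hl
      split <;> intro hl
      · exact grayL_ne_nil k (m - l) (by simpa using congrArg List.reverse hl)
      · exact grayL_ne_nil k (m - l) hl
    unfold List.Chain'
    rw [List.isChain_flatten hnil]
    constructor
    · intro bl hbl
      rw [List.mem_map] at hbl
      obtain ⟨l, _, rfl⟩ := hbl
      apply List.isChain_map_of_isChain _ (fun a b h => gAdj_snoc l h)
      split
      · rw [List.isChain_reverse]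
        exact (ih (m - l)).imp (fun _ _ h => gAdj_symm h)
      · exact ih (m - l)
    · rw [List.isChain_map]
      refine (List.isChain_range_succ _ m).mpr ?_
      intro l hl x hx y hy
      have hml : 1 ≤ m - l := by omega
      have hml1 : m - (l + 1) = (m - l) - 1 := by omega
      rcases Nat.mod_two_eq_zero_or_one l with he | ho
      · have h1 : ¬ l % 2 = 1 := by omega
        have h2 : (l + 1) % 2 = 1 := by omega

        rw [if_neg h1] at hx
        rw [if_pos h2] at hy
        rw [List.getLast?_map, grayL_getLast k (m - l)] at hx
        rw [List.head?_map, List.head?_reverse, grayL_getLast k (m - (l+1))] at hy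
        simp only [Option.map_some, Option.mem_def, Option.some.injEq] at hx hy
        subst hx; subst hy
        rw [hml1]
        exact gAdj_boundary (k+1) (m - l) l (by omega) hml
      · have h1 : l % 2 = 1 := by omega
        have h2 : ¬ (l + 1) % 2 = 1 := by omega
        rw [if_pos h1] at hx
        rw [if_neg h2] at hy
        rw [List.getLast?_map, List.getLast?_reverse, grayL_head k (m - l)] at hx
        rw [List.head?_map, grayL_head k (m - (l+1))] at hy
        simp only [Option.map_some, Option.mem_def, Option.some.injEq] at hx hy
        subst hx; subst hy
        rw [hml1]
        exact gAdj_boundary 0 (m - l) l (by omega) hml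

/-- In the Gray code list `L(n,k)` for `k ≥ 2`, any two consecutive
composition vectors differ at exactly two coordinates, one increasing by 1 and
the other decreasing by 1. -/
theorem grayL_consecutive (n k : ℕ) (hk : 2 ≤ k) :
    ∀ a (h : a + 1 < (grayL n k).length),
      ∃ i j : Fin k, i ≠ j ∧
        ((grayL n k)[a + 1]'h) i = ((grayL n k)[a]'(Nat.lt_of_succ_lt h)) i + 1 ∧
        ((grayL n k)[a + 1]'h) j + 1 = ((grayL n k)[a]'(Nat.lt_of_succ_lt h)) j ∧
        ∀ l : Fin k, l ≠ i → l ≠ j →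
          ((grayL n k)[a + 1]'h) l = ((grayL n k)[a]'(Nat.lt_of_succ_lt h)) l := by
  obtain ⟨k', rfl⟩ : ∃ k', k = k' + 2 := ⟨k - 2, by omega⟩
  intro a h
  have hc := List.isChain_iff_getElem.mp (grayL_chain k' n) a (by omega)
  obtain ⟨i, j, hij, h1, h2, h3⟩ := hc
  exact ⟨i, j, hij, by simpa using h1, by simpa using h2, fun l hl1 hl2 => by
    simpa using h3 l hl1 hl2⟩
end

section
/- The smallest enclosing circle of a finite set of at least two points in the Euclidean plane is unique: if two closed disks of minimal radius both contain the set, they are equal. -/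
/-!
If two closed balls of the same minimal radius `r` contain `S`, then so does their intersection,
and by Apollonius's theorem that intersection lies in the ball of radius `√(r ^ 2 - (d / 2) ^ 2)`
about the midpoint of the centres, `d` being their distance. Minimality of `r` forces `d = 0`.
-/

open Metric EuclideanGeometry

theorem dist_midpoint_sq_le {V P : Type*} [NormedAddCommGroup V] [InnerProductSpace ℝ V]
    [MetricSpace P] [NormedAddTorsor V P] {a b c : P} {r : ℝ}
    (hb : dist a b ≤ r) (hc : dist a c ≤ r) :
    dist a (midpoint ℝ b c) ^ 2 ≤ r ^ 2 - (dist b c / 2) ^ 2 := by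
  have := dist_sq_add_dist_sq_eq_two_mul_dist_midpoint_sq_add_half_dist_sq a b c
  nlinarith [pow_le_pow_left₀ dist_nonneg hb 2, pow_le_pow_left₀ dist_nonneg hc 2]

theorem closedBall_inter_closedBall_subset_closedBall_midpoint {V P : Type*}
    [NormedAddCommGroup V] [InnerProductSpace ℝ V] [MetricSpace P]
    [NormedAddTorsor V P] (b c : P) (r : ℝ) :
    closedBall b r ∩ closedBall c r ⊆
      closedBall (midpoint ℝ b c) √(r ^ 2 - (dist b c / 2) ^ 2) := by
  rintro a ⟨hb, hc⟩
  rw [mem_closedBall, ← Real.sqrt_sq dist_nonneg]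
  exact Real.sqrt_le_sqrt (dist_midpoint_sq_le hb hc)

theorem eq_of_subset_closedBall_of_forall_le {V P : Type*}
    [NormedAddCommGroup V] [InnerProductSpace ℝ V] [MetricSpace P]
    [NormedAddTorsor V P] {S : Set P} {c₁ c₂ : P} {r : ℝ}
    (h₁ : S ⊆ closedBall c₁ r) (h₂ : S ⊆ closedBall c₂ r)
    (hmin : ∀ c r', S ⊆ closedBall c r' → r ≤ r') : c₁ = c₂ := by
  obtain ⟨a, ha⟩ : S.Nonempty := by
    refine Set.nonempty_iff_ne_empty.2 fun hS => ?_
    have := hmin c₁ (r - 1) (by simp [hS])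
    linarith
  have hr : 0 ≤ r := dist_nonneg.trans (h₁ ha)
  have hrad : 0 ≤ r ^ 2 - (dist c₁ c₂ / 2) ^ 2 :=
    (sq_nonneg _).trans (dist_midpoint_sq_le (h₁ ha) (h₂ ha))
  have hsub := (Set.subset_inter h₁ h₂).trans
    (closedBall_inter_closedBall_subset_closedBall_midpoint c₁ c₂ r)
  have hle := (Real.le_sqrt hr hrad).1 (hmin _ _ hsub)
  have hd : dist c₁ c₂ = 0 := by nlinarith [dist_nonneg (x := c₁) (y := c₂)]
  exact dist_eq_zero.1 hd

theorem sec_unique_general (S : Set (EuclideanSpace ℝ (Fin 2)))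
    (c₁ c₂ : EuclideanSpace ℝ (Fin 2)) (r₁ r₂ : ℝ)
    (h₁ : S ⊆ Metric.closedBall c₁ r₁)
    (h₁min : ∀ (c : EuclideanSpace ℝ (Fin 2)) (r : ℝ), S ⊆ Metric.closedBall c r → r₁ ≤ r)
    (h₂' : S ⊆ Metric.closedBall c₂ r₂)
    (h₂min : ∀ (c : EuclideanSpace ℝ (Fin 2)) (r : ℝ), S ⊆ Metric.closedBall c r → r₂ ≤ r) :
    Metric.closedBall c₁ r₁ = Metric.closedBall c₂ r₂ := by
  obtain rfl : r₁ = r₂ := le_antisymm (h₁min c₂ r₂ h₂') (h₂min c₁ r₁ h₁)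
  rw [eq_of_subset_closedBall_of_forall_le h₁ h₂' h₁min]

/-- The smallest enclosing circle of a finite set of at least two points in the
Euclidean plane is unique: two closed disks of minimal radius containing the
set coincide. -/
theorem sec_unique (S : Set (EuclideanSpace ℝ (Fin 2))) (hfin : S.Finite)
    (h2 : 2 ≤ S.ncard)
    (c₁ c₂ : EuclideanSpace ℝ (Fin 2)) (r₁ r₂ : ℝ)
    (h₁ : S ⊆ Metric.closedBall c₁ r₁)
    (h₁min : ∀ (c : EuclideanSpace ℝ (Fin 2)) (r : ℝ), S ⊆ Metric.closedBall c r → r₁ ≤ r)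
    (h₂' : S ⊆ Metric.closedBall c₂ r₂)
    (h₂min : ∀ (c : EuclideanSpace ℝ (Fin 2)) (r : ℝ), S ⊆ Metric.closedBall c r → r₂ ≤ r) :
    Metric.closedBall c₁ r₁ = Metric.closedBall c₂ r₂ :=
  sec_unique_general S c₁ c₂ r₁ r₂ h₁ h₁min h₂' h₂min
end

section
/- If D is the smallest enclosing disk of a finite point set S in the plane, then the center of D lies in the convex hull of the points of S lying on the boundary circle of D. -/
open RealInnerProductSpace Finset Metric

set_option maxHeartbeats 1000000

/-- The center of the smallest enclosing disk of a finite point set `S` in the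
plane lies in the convex hull of the points of `S` on the boundary circle. -/
theorem sec_center_in_hull (S : Set (EuclideanSpace ℝ (Fin 2))) (hfin : S.Finite)
    (hne : S.Nonempty)
    (c : EuclideanSpace ℝ (Fin 2)) (r : ℝ)
    (hencl : S ⊆ Metric.closedBall c r)
    (hmin : ∀ (c' : EuclideanSpace ℝ (Fin 2)) (r' : ℝ), S ⊆ Metric.closedBall c' r' → r ≤ r') :
    c ∈ convexHull ℝ {p | p ∈ S ∧ dist p c = r} := by
  by_contra hc
  set B : Set (EuclideanSpace ℝ (Fin 2)) := {p | p ∈ S ∧ dist p c = r} with hB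
  have hBfin : B.Finite := hfin.subset fun p hp => hp.1
  have hclosed : IsClosed (convexHull ℝ B) := (hBfin.isCompact_convexHull ℝ).isClosed
  obtain ⟨f, u, hfc, hfB⟩ :=
    geometric_hahn_banach_point_closed (convex_convexHull ℝ B) hclosed hc
  obtain ⟨v, hv⟩ := (InnerProductSpace.toDual ℝ (EuclideanSpace ℝ (Fin 2))).surjective f
  have hfv : ∀ x, f x = ⟪v, x⟫ := by
    intro x; rw [← hv, InnerProductSpace.toDual_apply_apply]
  set ε : ℝ := u - ⟪v, c⟫ with hε
  have hεpos : 0 < ε := by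
    have h := hfc; rw [hfv] at h; simp only [hε]; linarith
  have hinner : ∀ p ∈ B, ε < ⟪v, p - c⟫ := by
    intro p hp
    have h1 : u < f p := hfB p (subset_convexHull ℝ B hp)
    rw [hfv] at h1
    rw [inner_sub_right]
    simp only [hε]; linarith
  -- slack for interior points
  set T : Finset (EuclideanSpace ℝ (Fin 2)) := hfin.toFinset.filter (fun p => dist p c ≠ r) with hT
  set δ : ℝ := if hTne : T.Nonempty then r - T.sup' hTne (fun p => dist p c) else 1 with hδ
  have hδpos : 0 < δ := by
    rw [hδ]
    split_ifs with hTne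
    · rw [sub_pos, Finset.sup'_lt_iff]
      intro p hp
      rw [hT, Finset.mem_filter, Set.Finite.mem_toFinset] at hp
      exact lt_of_le_of_ne (mem_closedBall.mp (hencl hp.1)) hp.2
    · exact one_pos
  have hδle : ∀ p ∈ S, dist p c ≠ r → dist p c ≤ r - δ := by
    intro p hp hpr
    have hpT : p ∈ T := by rw [hT, Finset.mem_filter, Set.Finite.mem_toFinset]; exact ⟨hp, hpr⟩
    have hTne : T.Nonempty := ⟨p, hpT⟩
    rw [hδ, dif_pos hTne]
    have := Finset.le_sup' (fun p => dist p c) hpT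
    linarith
  set t : ℝ := min (ε / (‖v‖ ^ 2 + 1)) (δ / (‖v‖ + 1)) with ht
  have hnv : (0:ℝ) ≤ ‖v‖ := norm_nonneg v
  have htpos : 0 < t := by
    apply lt_min
    · positivity
    · positivity
  have ht1 : t * ‖v‖ ^ 2 < ε := by
    have h1 : t ≤ ε / (‖v‖ ^ 2 + 1) := min_le_left _ _
    have h2 : ε / (‖v‖ ^ 2 + 1) * (‖v‖ ^ 2 + 1) = ε := by
      field_simp
    nlinarith [sq_nonneg ‖v‖]
  have ht2 : t * ‖v‖ < δ := by
    have h1 : t ≤ δ / (‖v‖ + 1) := min_le_right _ _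
    have h2 : δ / (‖v‖ + 1) * (‖v‖ + 1) = δ := by field_simp
    nlinarith
  set c' : EuclideanSpace ℝ (Fin 2) := c + t • v with hc'
  have key : ∀ p ∈ S, dist p c' < r := by
    intro p hp
    by_cases hb : dist p c = r
    · have hr0 : 0 ≤ r := hb ▸ dist_nonneg
      have hip : ε < ⟪v, p - c⟫ := hinner p ⟨hp, hb⟩
      have hd : dist p c' ^ 2 = r ^ 2 - 2 * (t * ⟪v, p - c⟫) + t ^ 2 * ‖v‖ ^ 2 := by
        rw [hc', dist_eq_norm]
        have : p - (c + t • v) = (p - c) - t • v := by abel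
        rw [this, norm_sub_sq_real, real_inner_smul_right, real_inner_comm,
          norm_smul]
        have hnpc : ‖p - c‖ = r := by rw [← dist_eq_norm]; exact hb
        rw [hnpc]
        rw [mul_pow, Real.norm_eq_abs, sq_abs]
        try ring
      have hlt : dist p c' ^ 2 < r ^ 2 := by
        rw [hd]
        have h4 := mul_lt_mul_of_pos_left ht1 htpos
        have h5 := mul_lt_mul_of_pos_left hip htpos
        nlinarith
      nlinarith [dist_nonneg (x := p) (y := c'), hlt, hr0]
    · have h1 : dist p c ≤ r - δ := hδle p hp hb
      have h2 : dist p c' ≤ dist p c + dist c c' := dist_triangle p c c'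
      have h3 : dist c c' = t * ‖v‖ := by
        rw [hc', dist_eq_norm]
        simp [norm_smul, abs_of_pos htpos]
      linarith
  -- contradiction with minimality
  have hTSne : hfin.toFinset.Nonempty := by
    obtain ⟨p, hp⟩ := hne
    exact ⟨p, hfin.mem_toFinset.mpr hp⟩
  set r' : ℝ := hfin.toFinset.sup' hTSne (fun p => dist p c') with hr'
  have hsub : S ⊆ Metric.closedBall c' r' := by
    intro p hp
    rw [mem_closedBall]
    exact Finset.le_sup' (fun p => dist p c') (hfin.mem_toFinset.mpr hp)
  have hlt : r' < r := by
    rw [hr', Finset.sup'_lt_iff]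
    intro p hp
    exact key p (hfin.mem_toFinset.mp hp)
  exact absurd (hmin c' r' hsub) (not_le.mpr hlt)
end
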